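/- arXiv:2310.01348 — 2 statements merged into one kernel-verified Lean document; each statement's English description precedes it below -/
import Mathlib

section
/- If a vector x in R^n satisfies (1 − ε + ε√n)·‖x‖₂ ≤ ‖x‖₁ with sample mean μ = (∑ x_i)/n and sample variance σ² = (∑ x_i²)/n − μ², and x ≥ 0 componentwise, then σ² ≤ (n/(1 − ε + ε√n)² − 1)·μ². -/
theorem variance_bound_of_eps_fair (n : ℕ) (hn : 1 ≤ n) (x : Fin n → ℝ)
    (hx : ∀ i, 0 ≤ x i) (ε : ℝ) (hε : ε ∈ Set.Icc (0 : ℝ) 1)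
    (μ σ2 : ℝ) (hμ : μ = (∑ i, x i) / n) (hσ : σ2 = (∑ i, (x i) ^ 2) / n - μ ^ 2)
    (hfair : (1 - ε + ε * Real.sqrt n) * Real.sqrt (∑ i, (x i) ^ 2) ≤ ∑ i, x i) :
    σ2 ≤ (n / (1 - ε + ε * Real.sqrt n) ^ 2 - 1) * μ ^ 2 := by
  obtain ⟨hε0, hε1⟩ := hε
  set c : ℝ := 1 - ε + ε * Real.sqrt n with hc
  have hn1 : (1 : ℝ) ≤ (n : ℝ) := by exact_mod_cast hn
  have hns : (1 : ℝ) ≤ Real.sqrt n := by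
    rw [show (1:ℝ) = Real.sqrt 1 by simp]
    exact Real.sqrt_le_sqrt hn1
  have hc1 : (1 : ℝ) ≤ c := by nlinarith
  have hc0 : (0 : ℝ) < c := lt_of_lt_of_le one_pos hc1
  have hS : (0 : ℝ) ≤ ∑ i, (x i) ^ 2 := Finset.sum_nonneg fun i _ => sq_nonneg _
  have hsq : c ^ 2 * (∑ i, (x i) ^ 2) ≤ (∑ i, x i) ^ 2 := by
    have h1 : (c * Real.sqrt (∑ i, (x i) ^ 2)) ^ 2 ≤ (∑ i, x i) ^ 2 := by
      apply pow_le_pow_left₀ (by positivity) hfair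
    calc c ^ 2 * (∑ i, (x i) ^ 2)
        = (c * Real.sqrt (∑ i, (x i) ^ 2)) ^ 2 := by
          rw [mul_pow, Real.sq_sqrt hS]
      _ ≤ (∑ i, x i) ^ 2 := h1
  have hnpos : (0 : ℝ) < (n : ℝ) := by linarith
  rw [hσ, hμ]
  rw [div_pow]
  have key : (∑ i, (x i) ^ 2) / n ≤ n / c ^ 2 * ((∑ i, x i) ^ 2 / (n:ℝ) ^ 2) := by
    rw [div_le_iff₀ hnpos]
    have : (n:ℝ) / c ^ 2 * ((∑ i, x i) ^ 2 / (n:ℝ) ^ 2) * n = (∑ i, x i) ^ 2 / c ^ 2 := by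
      field_simp
    rw [this, le_div_iff₀ (by positivity)]
    linarith
  nlinarith [key]
end

section
/- Suppose S is nonempty and compact and the 0-fair problem over S is feasible. Then there exists ε_max ∈ [0,1] such that the ε-fair problem over S is feasible for all ε ∈ [0, ε_max] and infeasible for all ε ∈ (ε_max, 1]. -/
theorem exists_eps_max (n : ℕ) (hn : 1 ≤ n) (S : Set (Fin n → ℝ))
    (hS : S.Nonempty) (hSc : IsCompact S)
    (h0 : ∃ x ∈ S, (1 - (0:ℝ) + (0:ℝ) * Real.sqrt n) * Real.sqrt (∑ i, (x i) ^ 2) ≤ ∑ i, |x i|) :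
    ∃ εmax ∈ Set.Icc (0 : ℝ) 1,
      (∀ ε ∈ Set.Icc (0 : ℝ) εmax,
        ∃ x ∈ S, (1 - ε + ε * Real.sqrt n) * Real.sqrt (∑ i, (x i) ^ 2) ≤ ∑ i, |x i|) ∧
      (∀ ε ∈ Set.Ioc εmax (1 : ℝ),
        ¬ ∃ x ∈ S, (1 - ε + ε * Real.sqrt n) * Real.sqrt (∑ i, (x i) ^ 2) ≤ ∑ i, |x i|) := by
  obtain ⟨x0, hx0S, hx0⟩ := h0
  simp only [sub_zero, zero_mul, add_zero, one_mul] at hx0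
  have hsn1 : (1:ℝ) ≤ Real.sqrt n := by
    rw [show (1:ℝ) = Real.sqrt 1 by simp]
    exact Real.sqrt_le_sqrt (by exact_mod_cast hn)
  -- case: some point of S is zero
  by_cases hz : ∃ x ∈ S, (∑ i, (x i) ^ 2) = 0
  · obtain ⟨x, hxS, hx⟩ := hz
    refine ⟨1, ⟨zero_le_one, le_refl 1⟩, ?_, ?_⟩
    · intro ε _
      exact ⟨x, hxS, by
        rw [hx, Real.sqrt_zero, mul_zero]
        exact Finset.sum_nonneg fun i _ => abs_nonneg _⟩
    · intro ε hε
      exact absurd hε.1 (not_lt.mpr hε.2)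
  push_neg at hz
  have hpos : ∀ x ∈ S, 0 < Real.sqrt (∑ i, (x i) ^ 2) := fun x hx =>
    Real.sqrt_pos.mpr (lt_of_le_of_ne (Finset.sum_nonneg fun i _ => sq_nonneg _)
      (Ne.symm (hz x hx)))
  by_cases h1 : Real.sqrt n = 1
  · refine ⟨1, ⟨zero_le_one, le_refl 1⟩, ?_, ?_⟩
    · intro ε _
      refine ⟨x0, hx0S, ?_⟩
      rw [h1]; ring_nf; linarith
    · intro ε hε
      exact absurd hε.1 (not_lt.mpr hε.2)
  have hsn : (1:ℝ) < Real.sqrt n := lt_of_le_of_ne hsn1 (Ne.symm h1)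
  -- the ratio function
  set g : (Fin n → ℝ) → ℝ := fun x => (∑ i, |x i|) / Real.sqrt (∑ i, (x i) ^ 2) with hg
  have hgcont : ContinuousOn g S := by
    apply ContinuousOn.div
    · exact (continuous_finset_sum _ fun i _ => (continuous_apply i).abs).continuousOn
    · exact (Real.continuous_sqrt.comp
        (continuous_finset_sum _ fun i _ => (continuous_apply i).pow 2)).continuousOn
    · intro x hx
      exact ne_of_gt (hpos x hx)
  obtain ⟨xm, hxmS, hxm⟩ := hSc.exists_isMaxOn hS hgcont
  set M := g xm with hM
  have hM1 : (1:ℝ) ≤ M := by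
    have h : g x0 ≤ g xm := hxm hx0S
    have : (1:ℝ) ≤ g x0 := by
      rw [hg]
      rw [le_div_iff₀ (hpos x0 hx0S)]
      linarith
    linarith
  have hMn : M ≤ Real.sqrt n := by
    have hcs : (∑ i, |xm i|) ^ 2 ≤ (n:ℝ) * ∑ i, (xm i) ^ 2 := by
      have := sq_sum_le_card_mul_sum_sq (s := Finset.univ) (f := fun i => |xm i|)
      simpa [sq_abs] using this
    have h2 : (∑ i, |xm i|) ≤ Real.sqrt n * Real.sqrt (∑ i, (xm i) ^ 2) := by
      rw [← Real.sqrt_mul (by positivity)]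
      calc (∑ i, |xm i|) = Real.sqrt ((∑ i, |xm i|) ^ 2) := by
            rw [Real.sqrt_sq (Finset.sum_nonneg fun i _ => abs_nonneg _)]
        _ ≤ _ := Real.sqrt_le_sqrt hcs
    rw [hM, hg, div_le_iff₀ (hpos xm hxmS)]
    linarith
  refine ⟨(M - 1) / (Real.sqrt n - 1), ⟨div_nonneg (by linarith) (by linarith), ?_⟩, ?_, ?_⟩
  · rw [div_le_one (by linarith)]; linarith
  · intro ε ⟨hε0, hε1⟩
    refine ⟨xm, hxmS, ?_⟩
    have key : 1 - ε + ε * Real.sqrt n ≤ M := by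
      have : ε * (Real.sqrt n - 1) ≤ M - 1 := by
        have := (div_le_div_iff₀ (by linarith) (by linarith)).mp
          (by simpa using hε1 : ε / 1 ≤ (M - 1) / (Real.sqrt n - 1))
        linarith
      nlinarith
    have hMeq : M * Real.sqrt (∑ i, (xm i) ^ 2) = ∑ i, |xm i| := by
      rw [hM, hg, div_mul_cancel₀]
      exact ne_of_gt (hpos xm hxmS)
    calc (1 - ε + ε * Real.sqrt n) * Real.sqrt (∑ i, (xm i) ^ 2)
        ≤ M * Real.sqrt (∑ i, (xm i) ^ 2) :=
          mul_le_mul_of_nonneg_right key (Real.sqrt_nonneg _)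
      _ = _ := hMeq
  · rintro ε ⟨hεl, hεu⟩ ⟨x, hxS, hx⟩
    have hgx : g x ≤ g xm := hxm hxS
    have h2 : 1 - ε + ε * Real.sqrt n ≤ g x := by
      rw [hg, le_div_iff₀ (hpos x hxS)]
      linarith
    have h3 : ε * (Real.sqrt n - 1) ≤ M - 1 := by nlinarith
    have h4 : ε ≤ (M - 1) / (Real.sqrt n - 1) := by
      rw [le_div_iff₀ (by linarith)]; linarith
    linarith
end
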